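/- Let A ∈ ℂ^{n×n}, let G_1, …, G_{n−1} be Givens rotations (G_i acting on rows i and i+1 with s_i ≠ 0 for all i), set Q = G_1 G_2 ⋯ G_{n−1}, let D ∈ ℝ^{n×n} be a real diagonal matrix, and set R = t(QAQ^*) − Q (D + t(A)) Q^*. Then for every i with 3 ≤ i ≤ n, the i-th row of R G_1 G_2 ⋯ G_{i−2} has its first i−2 entries equal to zero: (R G_1 G_2 ⋯ G_{i−2})_{i,j} = 0 for all j = 1, …, i−2. Equivalently, e_i^T R = [0,…,0, v_i, d_i, w_i^*] G_{i−2}^* G_{i−3}^* ⋯ G_1^* for some v_i, d_i ∈ ℂ and w_i ∈ ℂ^{n−i}. -/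

import Mathlib

open Matrix BigOperators Finset

/-! Below the diagonal `t(QAQᴴ)` agrees with `QAQᴴ`, so in row `r` the entries `R r k`, `k < r`,
are those of `Q N Qᴴ` with `N = A - D - t(A)` upper triangular. The partial product
`P = G 0 ⋯ G (r-2)` is upper Hessenberg, so its column `j < r - 1` vanishes from row `r` on,
whence `(R P) r j = (Q N Qᴴ P) r j`. The later rotations do not touch that column, so it is also
column `j` of `Q`; as `Q` is unitary, `(R P) r j = (Q N) r j`, which vanishes because a
Hessenberg matrix times an upper triangular one is Hessenberg. -/

/-- The operator `t`: `t(A)_{ij} = A_{ij}` for `i > j`, `conj (A_{ji})` for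
`i < j`, and `0` on the diagonal. -/
noncomputable def tOp {n : ℕ} (A : Matrix (Fin n) (Fin n) ℂ) :
    Matrix (Fin n) (Fin n) ℂ :=
  Matrix.of fun i j =>
    if j < i then A i j else if i < j then (starRingEnd ℂ) (A j i) else 0

/-- `G` is the Givens rotation acting on (0-indexed) rows `i` and `i+1` with
parameters `c ∈ ℝ`, `s ∈ ℂ`, `c² + |s|² = 1`. -/
def IsGivensAt {n : ℕ} (i : ℕ) (c : ℝ) (s : ℂ) (G : Matrix (Fin n) (Fin n) ℂ) : Prop :=
  i + 1 < n ∧ c ^ 2 + ‖s‖ ^ 2 = 1 ∧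
  ∀ p q : Fin n,
    G p q =
      if (p : ℕ) = i ∧ (q : ℕ) = i then (c : ℂ)
      else if (p : ℕ) = i ∧ (q : ℕ) = i + 1 then s
      else if (p : ℕ) = i + 1 ∧ (q : ℕ) = i then -((starRingEnd ℂ) s)
      else if (p : ℕ) = i + 1 ∧ (q : ℕ) = i + 1 then (c : ℂ)
      else if p = q then 1 else 0

/-- The ordered product `G 0 * G 1 * ⋯ * G (m-1)` (`m` factors). -/
noncomputable def rotProdFrom0 {n : ℕ} (G : ℕ → Matrix (Fin n) (Fin n) ℂ) (m : ℕ) :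
    Matrix (Fin n) (Fin n) ℂ :=
  ((List.range m).map G).prod

namespace Matrix
variable {m R : Type*} [Fintype m] [DecidableEq m] [NonAssocSemiring R] {M N : Matrix m m R}


lemma mul_apply_of_col_eq_one {q : m} (h : ∀ t, N t q = (1 : Matrix m m R) t q) (p : m) :
    (M * N) p q = M p q := by
  simp [mul_apply, h, one_apply]

lemma mul_apply_of_row_eq_one {p : m} (h : ∀ t, M p t = (1 : Matrix m m R) p t) (q : m) :
    (M * N) p q = N p q := by
  simp [mul_apply, h, one_apply]

end Matrix

namespace IsGivensAt
variable {n i : ℕ} {c : ℝ} {s : ℂ} {G : Matrix (Fin n) (Fin n) ℂ}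


lemma apply_of_row_ne (h : IsGivensAt i c s G) {p : Fin n} (hp : (p : ℕ) ≠ i)
    (hp' : (p : ℕ) ≠ i + 1) (q : Fin n) : G p q = (1 : Matrix (Fin n) (Fin n) ℂ) p q := by
  rw [h.2.2, one_apply]; simp [hp, hp']

lemma apply_of_col_ne (h : IsGivensAt i c s G) {q : Fin n} (hq : (q : ℕ) ≠ i)
    (hq' : (q : ℕ) ≠ i + 1) (p : Fin n) : G p q = (1 : Matrix (Fin n) (Fin n) ℂ) p q := by
  rw [h.2.2, one_apply]; simp [hq, hq']

lemma conjTranspose_mul_self (h : IsGivensAt i c s G) : Gᴴ * G = 1 := by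
  have off_block : ∀ p q : Fin n, (q : ℕ) ≠ i → (q : ℕ) ≠ i + 1 →
      (Gᴴ * G) p q = (1 : Matrix (Fin n) (Fin n) ℂ) p q := fun p q hq hq' => by
    rw [mul_apply_of_col_eq_one (h.apply_of_col_ne hq hq'), conjTranspose_apply,
      h.apply_of_row_ne hq hq', ← conjTranspose_apply, conjTranspose_one]
  obtain ⟨hi, hcs, hG⟩ := h
  have hcs' : (c : ℂ) ^ 2 + s * starRingEnd ℂ s = 1 := by
    rw [Complex.mul_conj, ← Complex.sq_norm]; exact_mod_cast hcs
  ext p q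
  by_cases hq_off : (q : ℕ) ≠ i ∧ (q : ℕ) ≠ i + 1
  · exact off_block p q hq_off.1 hq_off.2
  by_cases hp_off : (p : ℕ) ≠ i ∧ (p : ℕ) ≠ i + 1
  · rw [← (isHermitian_conjTranspose_mul_self G).apply, off_block q p hp_off.1 hp_off.2,
      isHermitian_one.apply]
  have hq : (q : ℕ) = i ∨ (q : ℕ) = i + 1 := by omega
  have hp : (p : ℕ) = i ∨ (p : ℕ) = i + 1 := by omega
  rw [mul_apply,
    Fintype.sum_eq_add ⟨i, by omega⟩ ⟨i + 1, hi⟩ (by simp [Fin.ext_iff]) fun t ht => by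
      simp only [ne_eq, Fin.ext_iff] at ht
      rcases hq with hq | hq <;> simp [hG t q, hq, ht, Fin.ext_iff]]
  rcases hp with hp | hp <;> rcases hq with hq | hq <;>
    simp only [conjTranspose_apply, hG, hp, hq, one_apply, Fin.ext_iff, and_self, and_true,
      and_false, ↓reduceIte, Nat.add_eq_left, Nat.left_eq_add, one_ne_zero,
      RCLike.star_def, Complex.conj_ofReal, star_neg, RingHomCompTriple.comp_apply,
      RingHom.id_apply, mul_neg, neg_mul, neg_neg] <;>
    first | ring1 | linear_combination hcs'

end IsGivensAt

lemma tOp_apply_of_lt {n : ℕ} (A : Matrix (Fin n) (Fin n) ℂ) {i j : Fin n} (h : j < i) :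
    tOp A i j = A i j := by
  simp [tOp, h]

lemma isUpperTriangular_sub_tOp {n : ℕ} (A : Matrix (Fin n) (Fin n) ℂ) :
    (A - tOp A).IsUpperTriangular := fun i j (h : j < i) => by
  rw [Matrix.sub_apply, tOp_apply_of_lt A h, sub_self]

def IsUpperHessenberg {n : ℕ} {R : Type*} [Zero R] (M : Matrix (Fin n) (Fin n) R) : Prop :=
  ∀ ⦃k j : Fin n⦄, (j : ℕ) + 1 < k → M k j = 0

lemma IsUpperHessenberg.mul_isUpperTriangular {n : ℕ} {R : Type*} [NonUnitalNonAssocSemiring R]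
    {M N : Matrix (Fin n) (Fin n) R} (hM : IsUpperHessenberg M) (hN : N.IsUpperTriangular) :
    IsUpperHessenberg (M * N) := fun k j hkj =>
  mul_apply.trans <| Finset.sum_eq_zero fun t _ => by
    rcases le_or_gt t j with htj | hjt
    · rw [hM (by omega : (t : ℕ) + 1 < k), zero_mul]
    · rw [hN hjt, mul_zero]

lemma rotProdFrom0_succ {n : ℕ} (G : ℕ → Matrix (Fin n) (Fin n) ℂ) (m : ℕ) :
    rotProdFrom0 G (m + 1) = rotProdFrom0 G m * G m := by
  simp [rotProdFrom0, List.range_succ]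

section RotationProducts

variable {n : ℕ} {c : ℕ → ℝ} {s : ℕ → ℂ} {G : ℕ → Matrix (Fin n) (Fin n) ℂ}
  (hG : ∀ i, i + 1 < n → IsGivensAt i (c i) (s i) (G i))
include hG

lemma rotProdFrom0_apply_of_lt {m : ℕ} {k : Fin n} (hk : m < k) (j : Fin n) :
    rotProdFrom0 G m k j = (1 : Matrix (Fin n) (Fin n) ℂ) k j := by
  induction m generalizing j with
  | zero => rfl
  | succ m ih =>
    rw [rotProdFrom0_succ, mul_apply_of_row_eq_one (ih (by omega)),
      (hG m (by omega)).apply_of_row_ne (by omega) (by omega)]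

lemma rotProdFrom0_isUpperHessenberg {m : ℕ} (hm : m ≤ n - 1) :
    IsUpperHessenberg (rotProdFrom0 G m) := by
  induction m with
  | zero => exact fun k j hkj => one_apply_ne (by omega)
  | succ m ih =>
    intro k j hkj
    have hGm := hG m (by omega)
    rw [rotProdFrom0_succ]
    by_cases hj : (j : ℕ) ≠ m ∧ (j : ℕ) ≠ m + 1
    · rw [mul_apply_of_col_eq_one (hGm.apply_of_col_ne hj.1 hj.2), ih (by omega) hkj]
    · rw [mul_apply_of_row_eq_one (rotProdFrom0_apply_of_lt hG (by omega)),
        hGm.apply_of_row_ne (by omega) (by omega), one_apply_ne (by omega)]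

lemma rotProdFrom0_apply_eq_of_lt_of_le {m m' : ℕ} {j : Fin n} (hj : j < m) (hm : m ≤ m')
    (hm' : m' ≤ n - 1) (k : Fin n) : rotProdFrom0 G m' k j = rotProdFrom0 G m k j := by
  induction m', hm using Nat.le_induction with
  | base => rfl
  | succ m' hmm' ih =>
    rw [rotProdFrom0_succ,
      mul_apply_of_col_eq_one ((hG m' (by omega)).apply_of_col_ne (by omega) (by omega)),
      ih (by omega)]

lemma rotProdFrom0_mem_unitaryGroup {m : ℕ} (hm : m ≤ n - 1) :
    rotProdFrom0 G m ∈ unitaryGroup (Fin n) ℂ :=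
  list_prod_mem <| List.forall_mem_map.mpr fun i hi =>
    mem_unitaryGroup_iff'.mpr
      (hG i (by have := List.mem_range.mp hi; omega)).conjTranspose_mul_self

end RotationProducts

/-- Indices are 0-based: the paper's `G_1, …, G_{n-1}` are `G 0, …, G (n-2)` and its row
`i ∈ {3, …, n}` is `r = i - 1`. -/
theorem stmt_12_general (n : ℕ)
    (c : ℕ → ℝ) (s : ℕ → ℂ) (G : ℕ → Matrix (Fin n) (Fin n) ℂ)
    (hG : ∀ i, i + 1 < n → IsGivensAt i (c i) (s i) (G i))
    (A : Matrix (Fin n) (Fin n) ℂ) (dD : Fin n → ℝ) :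
    let Q := rotProdFrom0 G (n - 1)
    let R := tOp (Q * A * Qᴴ) -
      Q * (Matrix.diagonal (fun i => (dD i : ℂ)) + tOp A) * Qᴴ
    ∀ r : Fin n, 2 ≤ (r : ℕ) → ∀ j : Fin n, (j : ℕ) < (r : ℕ) - 1 →
      (R * rotProdFrom0 G ((r : ℕ) - 1)) r j = 0 := by
  intro Q R r hr j hj
  set N := A - (diagonal (fun i => (dD i : ℂ)) + tOp A) with hN_def
  have hN : N.IsUpperTriangular := by
    rw [hN_def, sub_add_eq_sub_sub_swap]
    exact (isUpperTriangular_sub_tOp A).sub (blockTriangular_diagonal _)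
  have hR : ∀ k < r, R r k = (Q * N * Qᴴ) r k := fun k hk => by
    simp only [R, hN_def, mul_sub, sub_mul, Matrix.sub_apply, tOp_apply_of_lt _ hk]
  have hPQ : ∀ k, rotProdFrom0 G (r - 1) k j = Q k j := fun k =>
    (rotProdFrom0_apply_eq_of_lt_of_le hG (by omega) (by omega) le_rfl k).symm
  calc (R * rotProdFrom0 G (r - 1)) r j = (Q * N * Qᴴ * rotProdFrom0 G (r - 1)) r j := by
        rw [mul_apply, mul_apply]
        refine Finset.sum_congr rfl fun k _ => ?_
        rcases lt_or_ge k r with hk | hk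
        · rw [hR k hk]
        · rw [rotProdFrom0_isUpperHessenberg hG (by omega) (by omega : (j : ℕ) + 1 < k),
            mul_zero, mul_zero]
    _ = (Q * N * Qᴴ * Q) r j := by rw [mul_apply, mul_apply]; simp only [hPQ]
    _ = (Q * N) r j := by
      rw [Matrix.mul_assoc, ← star_eq_conjTranspose,
        mem_unitaryGroup_iff'.mp (rotProdFrom0_mem_unitaryGroup hG le_rfl), mul_one]
    _ = 0 := (rotProdFrom0_isUpperHessenberg hG le_rfl).mul_isUpperTriangular hN (by omega)

/-- Theorem 2.7 of the paper (0-indexed: the paper's `G_1, …, G_{n-1}` are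
`G 0, …, G (n-2)`, its row index `i ∈ {3, …, n}` is `r = i - 1 ∈ {2, …, n-1}`,
and its `R G_1 ⋯ G_{i-2}` is `R * (G 0 * ⋯ * G (r-2))`):
the `r`-th row of `R * G 0 * ⋯ * G (r-2)` has its first `r - 1` entries
equal to zero. -/
theorem stmt_12 (n : ℕ)
    (c : ℕ → ℝ) (s : ℕ → ℂ) (G : ℕ → Matrix (Fin n) (Fin n) ℂ)
    (hG : ∀ i, i + 1 < n → IsGivensAt i (c i) (s i) (G i))
    (hs : ∀ i, i + 1 < n → s i ≠ 0)
    (A : Matrix (Fin n) (Fin n) ℂ) (dD : Fin n → ℝ) :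
    let Q := rotProdFrom0 G (n - 1)
    let R := tOp (Q * A * Qᴴ) -
      Q * (Matrix.diagonal (fun i => (dD i : ℂ)) + tOp A) * Qᴴ
    ∀ r : Fin n, 2 ≤ (r : ℕ) → ∀ j : Fin n, (j : ℕ) < (r : ℕ) - 1 →
      (R * rotProdFrom0 G ((r : ℕ) - 1)) r j = 0 :=
  stmt_12_general n c s G hG A dD
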